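/- Let φ be smooth on ℝ × ℝ³, t ≠ 0. Then the pointwise identity -L[φ]·φ = |∇̸φ|² + (1 - r²/t²)|∂_rφ|² + 3t^{-2}|φ|² - Div₁[φ] holds, where L = Δ̸ + (1 - r²/t²) r^{-2} ∂_r(r² ∂_r ·) and Div₁[φ] = ∇̸_a(φ ∇̸^a φ) + r^{-2} ∂_r( (1 - r²/t²) φ r² ∂_rφ + (r³/t²)|φ|² ). -/

import Mathlib

open scoped BigOperators

noncomputable section

local notation "E3" => EuclideanSpace ℝ (Fin 3)

def pd (v : ℝ × E3) (ψ : ℝ × E3 → ℝ) : ℝ × E3 → ℝ := fun p => fderiv ℝ ψ p v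

/-- Time derivative `∂_t`. -/
def pt : (ℝ × E3 → ℝ) → ℝ × E3 → ℝ := pd (1, 0)

/-- Spatial derivative `∂_i`. -/
def px (i : Fin 3) : (ℝ × E3 → ℝ) → ℝ × E3 → ℝ := pd (0, EuclideanSpace.single i 1)

/-- Radial derivative `∂_r = (x/|x|)·∇`. -/
def pr (ψ : ℝ × E3 → ℝ) : ℝ × E3 → ℝ := fun p => ∑ i, (p.2 i / ‖p.2‖) * px i ψ p

/-- Spatial Laplacian. -/
def lap (ψ : ℝ × E3 → ℝ) : ℝ × E3 → ℝ := fun p => ∑ i, px i (px i ψ) p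

/-- The spherical Laplacian `Δ̸ = Δ - r^{-2}∂_r(r²∂_r·)`. -/
def sphLap (ψ : ℝ × E3 → ℝ) : ℝ × E3 → ℝ :=
  fun p => lap ψ p - (‖p.2‖ ^ 2)⁻¹ * pr (fun q => ‖q.2‖ ^ 2 * pr ψ q) p

/-- Squared angular gradient `|∇̸ψ|²`. -/
def angGradSq (ψ : ℝ × E3 → ℝ) (p : ℝ × E3) : ℝ :=
  ∑ i, (px i ψ p - (p.2 i / ‖p.2‖) * pr ψ p) ^ 2

/-- The degenerate elliptic operator `L = Δ̸ + (1 - r²/t²) r^{-2} ∂_r(r² ∂_r ·)`. -/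
def Lop (ψ : ℝ × E3 → ℝ) (p : ℝ × E3) : ℝ :=
  sphLap ψ p +
    (1 - ‖p.2‖ ^ 2 / p.1 ^ 2) * (‖p.2‖ ^ 2)⁻¹ * pr (fun q => ‖q.2‖ ^ 2 * pr ψ q) p

/-- `Div₁[φ] = ∇̸_a(φ ∇̸^a φ) + r^{-2}∂_r((1 - r²/t²) φ r² ∂_rφ + (r³/t²)|φ|²)`,
using the tangential-divergence identity `∇̸_a(φ∇̸^aφ) = |∇̸φ|² + φ Δ̸φ`. -/
def Div1 (ψ : ℝ × E3 → ℝ) (p : ℝ × E3) : ℝ :=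
  (angGradSq ψ p + ψ p * sphLap ψ p) +
    (‖p.2‖ ^ 2)⁻¹ * pr (fun q =>
      (1 - ‖q.2‖ ^ 2 / q.1 ^ 2) * ψ q * ‖q.2‖ ^ 2 * pr ψ q +
        (‖q.2‖ ^ 3 / q.1 ^ 2) * (ψ q) ^ 2) p


def Lc (j : Fin 3) : (ℝ × E3) →L[ℝ] ℝ :=
  (EuclideanSpace.proj j).comp (ContinuousLinearMap.snd ℝ ℝ E3)

lemma hasF_coord (j : Fin 3) (q : ℝ × E3) :
    HasFDerivAt (fun q : ℝ × E3 => q.2 j) (Lc j) q := (Lc j).hasFDerivAt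

lemma sum_sq (x : E3) : ∑ i, x i * x i = ‖x‖ ^ 2 := by
  rw [EuclideanSpace.norm_eq, Real.sq_sqrt (by positivity)]
  exact Finset.sum_congr rfl fun i _ => by rw [Real.norm_eq_abs, sq_abs, pow_two]

def L2 (q : ℝ × E3) : (ℝ × E3) →L[ℝ] ℝ := ∑ j, (q.2 j • Lc j + q.2 j • Lc j)

lemma hasF_n2 (q : ℝ × E3) : HasFDerivAt (fun q : ℝ × E3 => ‖q.2‖ ^ 2) (L2 q) q := by
  have h : (fun q : ℝ × E3 => ‖q.2‖ ^ 2) = fun q => ∑ j, q.2 j * q.2 j := by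
    funext q; rw [sum_sq]
  rw [h]
  exact HasFDerivAt.fun_sum fun j _ => (hasF_coord j q).mul (hasF_coord j q)

lemma L2_apply (q v : ℝ × E3) : L2 q v = ∑ j, 2 * q.2 j * v.2 j := by
  simp only [L2, ContinuousLinearMap.sum_apply, ContinuousLinearMap.add_apply,
    ContinuousLinearMap.smul_apply, smul_eq_mul]
  refine Finset.sum_congr rfl fun j _ => ?_
  have : Lc j v = v.2 j := rfl
  rw [this]; ring

lemma hasF_nr {q : ℝ × E3} (hq : q.2 ≠ 0) :
    HasFDerivAt (fun q : ℝ × E3 => ‖q.2‖) ((1 / (2 * ‖q.2‖)) • L2 q) q := by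
  have h : (fun q : ℝ × E3 => ‖q.2‖) = fun q => Real.sqrt (‖q.2‖ ^ 2) := by
    funext q; rw [Real.sqrt_sq (norm_nonneg _)]
  rw [h]
  have hne : ‖q.2‖ ^ 2 ≠ 0 := pow_ne_zero 2 (norm_ne_zero_iff.mpr hq)
  have := (Real.hasDerivAt_sqrt hne).comp_hasFDerivAt q (hasF_n2 q)
  rwa [Real.sqrt_sq (norm_nonneg _)] at this

lemma hasF_ti {q : ℝ × E3} (hq : q.1 ≠ 0) :
    HasFDerivAt (fun q : ℝ × E3 => (q.1 ^ 2)⁻¹)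
      ((-(↑2 * q.1 ^ 1) / (q.1 ^ 2) ^ 2) • ContinuousLinearMap.fst ℝ ℝ E3) q := by
  have hd : HasDerivAt (fun t : ℝ => (t ^ 2)⁻¹) (-(↑2 * q.1 ^ 1) / (q.1 ^ 2) ^ 2) q.1 :=
    (hasDerivAt_pow 2 q.1).inv (pow_ne_zero 2 hq)
  exact hd.comp_hasFDerivAt q hasFDerivAt_fst

section pdlemmas
variable {p v : ℝ × E3} {f g : ℝ × E3 → ℝ}

lemma pd_of_hasF {L : (ℝ × E3) →L[ℝ] ℝ} (h : HasFDerivAt f L p) : pd v f p = L v := by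
  rw [pd, h.fderiv]

lemma pd_add (hf : DifferentiableAt ℝ f p) (hg : DifferentiableAt ℝ g p) :
    pd v (fun q => f q + g q) p = pd v f p + pd v g p := by
  simp only [pd, fderiv_fun_add hf hg, ContinuousLinearMap.add_apply]

lemma pd_sub (hf : DifferentiableAt ℝ f p) (hg : DifferentiableAt ℝ g p) :
    pd v (fun q => f q - g q) p = pd v f p - pd v g p := by
  simp only [pd, fderiv_fun_sub hf hg, ContinuousLinearMap.sub_apply]

lemma pd_mul (hf : DifferentiableAt ℝ f p) (hg : DifferentiableAt ℝ g p) :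
    pd v (fun q => f q * g q) p = pd v f p * g p + f p * pd v g p := by
  simp only [pd, fderiv_fun_mul hf hg, ContinuousLinearMap.add_apply,
    ContinuousLinearMap.smul_apply, smul_eq_mul]
  ring

lemma pd_const (c : ℝ) : pd v (fun _ => c) p = 0 := by
  simp [pd]
end pdlemmas



section prlemmas
variable {p : ℝ × E3} {f g : ℝ × E3 → ℝ}

lemma pr_add (hf : DifferentiableAt ℝ f p) (hg : DifferentiableAt ℝ g p) :
    pr (fun q => f q + g q) p = pr f p + pr g p := by
  simp only [pr, px, pd_add hf hg, mul_add]
  exact Finset.sum_add_distrib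

lemma pr_sub (hf : DifferentiableAt ℝ f p) (hg : DifferentiableAt ℝ g p) :
    pr (fun q => f q - g q) p = pr f p - pr g p := by
  simp only [pr, px, pd_sub hf hg, mul_sub]
  rw [Finset.sum_sub_distrib]

lemma pr_mul (hf : DifferentiableAt ℝ f p) (hg : DifferentiableAt ℝ g p) :
    pr (fun q => f q * g q) p = pr f p * g p + f p * pr g p := by
  simp only [pr, px, pd_mul hf hg, mul_add]
  rw [Finset.sum_add_distrib]
  congr 1
  · rw [Finset.sum_mul]; exact Finset.sum_congr rfl fun i _ => by ring
  · rw [Finset.mul_sum]; exact Finset.sum_congr rfl fun i _ => by ring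

lemma pr_const (c : ℝ) : pr (fun _ => c) p = 0 := by
  simp [pr, px, pd_const]

lemma pr_n2 {p : ℝ × E3} (hx : p.2 ≠ 0) :
    pr (fun q : ℝ × E3 => ‖q.2‖ ^ 2) p = 2 * ‖p.2‖ := by
  have hr : ‖p.2‖ ≠ 0 := norm_ne_zero_iff.mpr hx
  have hv : ∀ i : Fin 3, px i (fun q : ℝ × E3 => ‖q.2‖ ^ 2) p = 2 * p.2 i := by
    intro i
    rw [px, pd_of_hasF (hasF_n2 p), L2_apply]
    simp [EuclideanSpace.single_apply]
  simp only [pr, hv]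
  have : ∀ i : Fin 3, p.2 i / ‖p.2‖ * (2 * p.2 i) = 2 * (p.2 i * p.2 i) / ‖p.2‖ := by
    intro i; ring
  rw [Finset.sum_congr rfl fun i _ => this i, ← Finset.sum_div, ← Finset.mul_sum, sum_sq]
  field_simp

lemma pr_nr {p : ℝ × E3} (hx : p.2 ≠ 0) :
    pr (fun q : ℝ × E3 => ‖q.2‖) p = 1 := by
  have hr : ‖p.2‖ ≠ 0 := norm_ne_zero_iff.mpr hx
  have hv : ∀ i : Fin 3, px i (fun q : ℝ × E3 => ‖q.2‖) p = p.2 i / ‖p.2‖ := by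
    intro i
    rw [px, pd_of_hasF (hasF_nr hx)]
    rw [ContinuousLinearMap.smul_apply, L2_apply]
    simp [EuclideanSpace.single_apply]
    field_simp
  simp only [pr, hv]
  have : ∀ i : Fin 3, p.2 i / ‖p.2‖ * (p.2 i / ‖p.2‖) = p.2 i * p.2 i / (‖p.2‖ * ‖p.2‖) := by
    intro i; ring
  rw [Finset.sum_congr rfl fun i _ => this i, ← Finset.sum_div, sum_sq]
  rw [pow_two]
  field_simp

lemma pr_ti {p : ℝ × E3} (ht : p.1 ≠ 0) :
    pr (fun q : ℝ × E3 => (q.1 ^ 2)⁻¹) p = 0 := by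
  have hv : ∀ i : Fin 3, px i (fun q : ℝ × E3 => (q.1 ^ 2)⁻¹) p = 0 := by
    intro i
    rw [px, pd_of_hasF (hasF_ti ht)]
    simp
  simp [pr, hv]

end prlemmas


/-- Pointwise identity
`-L[φ]·φ = |∇̸φ|² + (1 - r²/t²)|∂_rφ|² + 3t^{-2}|φ|² - Div₁[φ]`. -/
theorem first_order_pointwise_identity
    (φ : ℝ × E3 → ℝ) (hφ : ContDiff ℝ (⊤ : ℕ∞) φ) :
    ∀ p : ℝ × E3, p.1 ≠ 0 → p.2 ≠ 0 →
      -(Lop φ p) * φ p =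
        angGradSq φ p + (1 - ‖p.2‖ ^ 2 / p.1 ^ 2) * (pr φ p) ^ 2 +
          3 * (p.1 ^ 2)⁻¹ * (φ p) ^ 2 - Div1 φ p := by
  intro p ht hx
  have hr : ‖p.2‖ ≠ 0 := norm_ne_zero_iff.mpr hx
  have hφd : DifferentiableAt ℝ φ p := (hφ.differentiable (by simp)).differentiableAt
  have hpxd : ∀ i : Fin 3, Differentiable ℝ (px i φ) := by
    intro i
    have h1 : ContDiff ℝ (⊤ : ℕ∞) (fderiv ℝ φ) := hφ.fderiv_right (by simp)
    have h2 : ContDiff ℝ (⊤ : ℕ∞) (fun q : ℝ × E3 => fderiv ℝ φ q (0, EuclideanSpace.single i 1)) :=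
      h1.clm_apply contDiff_const
    exact h2.differentiable (by simp)
  have hn2d : ∀ q : ℝ × E3, DifferentiableAt ℝ (fun q : ℝ × E3 => ‖q.2‖ ^ 2) q :=
    fun q => (hasF_n2 q).differentiableAt
  have hnrd : DifferentiableAt ℝ (fun q : ℝ × E3 => ‖q.2‖) p := (hasF_nr hx).differentiableAt
  have htid : DifferentiableAt ℝ (fun q : ℝ × E3 => (q.1 ^ 2)⁻¹) p := (hasF_ti ht).differentiableAt
  have hprφd : DifferentiableAt ℝ (pr φ) p := by
    have h : DifferentiableAt ℝ (fun q : ℝ × E3 => ∑ i, (q.2 i / ‖q.2‖) * px i φ q) p := by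
      have e : (fun q : ℝ × E3 => ∑ i, (q.2 i / ‖q.2‖) * px i φ q)
          = fun q : ℝ × E3 => ∑ i, q.2 i * ‖q.2‖⁻¹ * px i φ q := by
        funext q; exact Finset.sum_congr rfl fun i _ => by rw [div_eq_mul_inv]
      rw [e]
      exact DifferentiableAt.fun_sum fun i _ =>
        (((hasF_coord i p).differentiableAt.mul (hnrd.inv hr))).mul ((hpxd i) p)
    exact h
  have hGd : DifferentiableAt ℝ (fun q : ℝ × E3 => ‖q.2‖ ^ 2 * pr φ q) p := (hn2d p).mul hprφd
  have hn2tid : DifferentiableAt ℝ (fun q : ℝ × E3 => ‖q.2‖ ^ 2 * (q.1 ^ 2)⁻¹) p :=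
    (hn2d p).mul htid
  have h1d : DifferentiableAt ℝ (fun _ : ℝ × E3 => (1 : ℝ)) p := differentiableAt_const 1
  have hcd : DifferentiableAt ℝ (fun q : ℝ × E3 => 1 - ‖q.2‖ ^ 2 * (q.1 ^ 2)⁻¹) p :=
    h1d.sub hn2tid
  have hcφd : DifferentiableAt ℝ (fun q : ℝ × E3 => (1 - ‖q.2‖ ^ 2 * (q.1 ^ 2)⁻¹) * φ q) p :=
    hcd.mul hφd
  have hn3d : DifferentiableAt ℝ (fun q : ℝ × E3 => ‖q.2‖ ^ 2 * ‖q.2‖) p := (hn2d p).mul hnrd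
  have hn3tid : DifferentiableAt ℝ (fun q : ℝ × E3 => ‖q.2‖ ^ 2 * ‖q.2‖ * (q.1 ^ 2)⁻¹) p :=
    hn3d.mul htid
  have hφφd : DifferentiableAt ℝ (fun q : ℝ × E3 => φ q * φ q) p := hφd.mul hφd
  have hAd : DifferentiableAt ℝ
      (fun q : ℝ × E3 => (1 - ‖q.2‖ ^ 2 * (q.1 ^ 2)⁻¹) * φ q * (‖q.2‖ ^ 2 * pr φ q)) p :=
    hcφd.mul hGd
  have hBd : DifferentiableAt ℝ
      (fun q : ℝ × E3 => ‖q.2‖ ^ 2 * ‖q.2‖ * (q.1 ^ 2)⁻¹ * (φ q * φ q)) p :=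
    hn3tid.mul hφφd
  have hF : (fun q : ℝ × E3 =>
        (1 - ‖q.2‖ ^ 2 / q.1 ^ 2) * φ q * ‖q.2‖ ^ 2 * pr φ q +
          ‖q.2‖ ^ 3 / q.1 ^ 2 * φ q ^ 2)
      = fun q : ℝ × E3 =>
        (1 - ‖q.2‖ ^ 2 * (q.1 ^ 2)⁻¹) * φ q * (‖q.2‖ ^ 2 * pr φ q) +
          ‖q.2‖ ^ 2 * ‖q.2‖ * (q.1 ^ 2)⁻¹ * (φ q * φ q) := by
    funext q; ring
  simp only [Lop, Div1, hF]
  rw [pr_add hAd hBd, pr_mul hcφd hGd, pr_mul hcd hφd, pr_sub h1d hn2tid,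
    pr_mul (hn2d p) htid, pr_mul hn3tid hφφd, pr_mul hn3d htid, pr_mul (hn2d p) hnrd,
    pr_mul hφd hφd, pr_const, pr_n2 hx, pr_nr hx, pr_ti ht]
  field_simp
  ring
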